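/- There is an injective algebra homomorphism from the quantum torus T = R⟨α^{±1},β^{±1},γ^{±1}⟩/(βα=qαβ, γβ=qβγ, αγ=qγα) into the quantum torus T' = R⟨a^{±1},b^{±1},c^{±1}⟩/(ba=qab, cb=qbc, ac=qca), given by α ↦ q^{1/2} bc, β ↦ q^{1/2} ca, γ ↦ q^{1/2} ab. -/

import Mathlib

noncomputable section

open LaurentPolynomial

/-- The ground ring `R = ℤ[q^{±1/2}]`, with `q = T 2`. -/
abbrev R : Type := LaurentPolynomial ℤ

abbrev FT : Type := FreeAlgebra R (Fin 6)

def tα : FT := FreeAlgebra.ι R (0 : Fin 6)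
def tβ : FT := FreeAlgebra.ι R (1 : Fin 6)
def tγ : FT := FreeAlgebra.ι R (2 : Fin 6)
def tα' : FT := FreeAlgebra.ι R (3 : Fin 6)
def tβ' : FT := FreeAlgebra.ι R (4 : Fin 6)
def tγ' : FT := FreeAlgebra.ι R (5 : Fin 6)

/-- scalar `q^{n/2}` -/
def fs (n : ℤ) : FT := algebraMap R FT (T n)

/-- Relations of the quantum torus
`T = R⟨α^{±1}, β^{±1}, γ^{±1}⟩/(βα = qαβ, γβ = qβγ, αγ = qγα)`. -/
inductive TRel : FT → FT → Prop
  | αinv : TRel (tα * tα') 1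
  | invα : TRel (tα' * tα) 1
  | βinv : TRel (tβ * tβ') 1
  | invβ : TRel (tβ' * tβ) 1
  | γinv : TRel (tγ * tγ') 1
  | invγ : TRel (tγ' * tγ) 1
  | βα : TRel (tβ * tα) (fs 2 * (tα * tβ))
  | γβ : TRel (tγ * tβ) (fs 2 * (tβ * tγ))
  | αγ : TRel (tα * tγ) (fs 2 * (tγ * tα))

/-- The quantum torus. -/
abbrev QT : Type := RingQuot TRel

def qα : QT := RingQuot.mkAlgHom R TRel tα
def qβ : QT := RingQuot.mkAlgHom R TRel tβ
def qγ : QT := RingQuot.mkAlgHom R TRel tγ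


/-- Relations of the quantum torus
`T' = R⟨a^{±1}, b^{±1}, c^{±1}⟩/(ba = qab, cb = qbc, ac = qca)`, with generators
`a, b, c` and their inverses. -/
inductive T'Rel : FT → FT → Prop
  | ainv : T'Rel (tα * tα') 1
  | inva : T'Rel (tα' * tα) 1
  | binv : T'Rel (tβ * tβ') 1
  | invb : T'Rel (tβ' * tβ) 1
  | cinv : T'Rel (tγ * tγ') 1
  | invc : T'Rel (tγ' * tγ) 1
  | ba : T'Rel (tβ * tα) (fs 2 * (tα * tβ))
  | cb : T'Rel (tγ * tβ) (fs 2 * (tβ * tγ))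
  | ac : T'Rel (tα * tγ) (fs 2 * (tγ * tα))

abbrev QT' : Type := RingQuot T'Rel

def qa : QT' := RingQuot.mkAlgHom R T'Rel tα
def qb : QT' := RingQuot.mkAlgHom R T'Rel tβ
def qc : QT' := RingQuot.mkAlgHom R T'Rel tγ

/-- scalar `q^{n/2}` in `T'` -/
def qs (n : ℤ) : QT' := algebraMap R QT' (T n)


/-!
With `t = q^{1/2}` central, the elements `t·bc, t·ca, t·ab` of `T'` satisfy the same
`q`-commutation relations as `α, β, γ`, so the map is well defined.

For injectivity, let `T'` act on `ℤ³ →₀ R` with `a, b, c` acting as shifts along the three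
coordinate axes, twisted by powers of `q`. Moving generators past each other only costs powers of
`q`, so the monomials `α^x β^y γ^z` span `T`, and the image of such a monomial sends `δ₀` to a unit
multiple of `δ` at `(y + z, x + z, x + y)`. This map `ℤ³ → ℤ³` is injective, so these images are
linearly independent, and evaluating the action at `δ₀` is injective on `T`.
-/

section QCommute

variable {G H : Type*} [Group G] [Group H] {z a b c : G}

theorem mul_eq_inv_mul_of_mul_eq (h : b * a = z * (a * b)) : a * b = z⁻¹ * (b * a) := by
  rw [h, inv_mul_cancel_left]

theorem mul_zpow_of_mul_eq (hza : Commute z a) (h : b * a = z * (a * b)) (x : ℤ) :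
    b * a ^ x = z ^ x * (a ^ x * b) := by
  have hconj : b * a * b⁻¹ = z * a := by rw [h, ← mul_assoc, mul_inv_cancel_right]
  calc b * a ^ x = (b * a * b⁻¹) ^ x * b := by rw [conj_zpow, inv_mul_cancel_right]
    _ = z ^ x * (a ^ x * b) := by rw [hconj, hza.mul_zpow, mul_assoc]

theorem zpow_mul_zpow_of_mul_eq (hza : Commute z a) (hzb : Commute z b)
    (h : b * a = z * (a * b)) (e x : ℤ) : b ^ e * a ^ x = z ^ (e * x) * (a ^ x * b ^ e) := by
  have hab := mul_zpow_of_mul_eq hzb.inv_left (mul_eq_inv_mul_of_mul_eq h) e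
  have hba : b ^ e * a = z ^ e * (a * b ^ e) := by
    simpa using mul_eq_inv_mul_of_mul_eq hab
  rw [mul_zpow_of_mul_eq (hza.zpow_left e) hba, zpow_mul]

structure IsQuantumTorusTriple (z a b c : G) : Prop where
  ba : b * a = z * (a * b)
  cb : c * b = z * (b * c)
  ac : a * c = z * (c * a)

namespace IsQuantumTorusTriple

theorem rotate (h : IsQuantumTorusTriple z a b c) : IsQuantumTorusTriple z b c a :=
  ⟨h.cb, h.ac, h.ba⟩

theorem map (h : IsQuantumTorusTriple z a b c) (f : G →* H) :
    IsQuantumTorusTriple (f z) (f a) (f b) (f c) := by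
  constructor <;> simp only [← map_mul, h.ba, h.cb, h.ac]

theorem mul_left (h : IsQuantumTorusTriple z a b c) (hz : z ∈ Subgroup.center G) {t : G}
    (ht : t ∈ Subgroup.center G) : IsQuantumTorusTriple z (t * a) (t * b) (t * c) := by
  have ht' := Subgroup.mem_center_iff.mp ht
  have hzt : t * z = z * t := Subgroup.mem_center_iff.mp hz t
  have key : ∀ {x y : G}, y * x = z * (x * y) → (t * y) * (t * x) = z * ((t * x) * (t * y)) := by
    intro x y hxy
    rw [mul_assoc, ← mul_assoc y, ht' y, mul_assoc, hxy, mul_assoc t x, ← mul_assoc x, ht' x]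
    simp only [← mul_assoc, hzt]
  exact ⟨key h.ba, key h.cb, key h.ac⟩

theorem cyclic_mul (h : IsQuantumTorusTriple z a b c) (hz : z ∈ Subgroup.center G) :
    IsQuantumTorusTriple z (b * c) (c * a) (a * b) := by
  have hz' := Subgroup.mem_center_iff.mp hz
  have hz'' := Subgroup.mem_center_iff.mp (Subgroup.inv_mem _ hz)
  have key : ∀ {a b c : G}, IsQuantumTorusTriple z a b c →
      c * a * (b * c) = z * (b * c * (c * a)) := by
    intro a b c h
    calc c * a * (b * c) = c * (a * b) * c := by simp only [mul_assoc]
      _ = z⁻¹ * ((c * b) * (a * c)) := by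
        rw [mul_eq_inv_mul_of_mul_eq h.ba, ← mul_assoc c, hz'' c]; simp only [mul_assoc]
      _ = z * (b * c * (c * a)) := by
        rw [h.cb, h.ac, mul_assoc z, ← mul_assoc (b * c), hz' (b * c)]; group
  exact ⟨key h, key h.rotate, key h.rotate.rotate⟩

end IsQuantumTorusTriple

def monomial (a b c : G) (m : ℤ × ℤ × ℤ) : G := a ^ m.1 * b ^ m.2.1 * c ^ m.2.2

theorem map_monomial {F : Type*} [FunLike F G H] [MonoidHomClass F G H] (f : F)
    (m : ℤ × ℤ × ℤ) : f (monomial a b c m) = monomial (f a) (f b) (f c) m := by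
  simp only [monomial, map_mul, map_zpow]

theorem monomial_zero : monomial a b c 0 = 1 := by simp [monomial]

theorem IsQuantumTorusTriple.exists_zpow_mul_monomial (h : IsQuantumTorusTriple z a b c)
    (hz : z ∈ Subgroup.center G) {g : G} (hg : g ∈ ({a, b, c} : Set G)) (e : ℤ)
    (m : ℤ × ℤ × ℤ) :
    ∃ (s : ℤ) (m' : ℤ × ℤ × ℤ), g ^ e * monomial a b c m = z ^ s * monomial a b c m' := by
  have hz' (g : G) : Commute z g := (Subgroup.mem_center_iff.mp hz g).symm
  obtain ⟨x, y, w⟩ := m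
  simp only [monomial, ← mul_assoc]
  rcases hg with rfl | rfl | rfl
  · exact ⟨0, (e + x, y, w), by simp [zpow_add]⟩
  · refine ⟨e * x, (x, e + y, w), ?_⟩
    rw [zpow_mul_zpow_of_mul_eq (hz' _) (hz' _) h.ba]
    simp only [mul_assoc, zpow_add]
  · refine ⟨-(x * e) + e * y, (x, y, e + w), ?_⟩
    have hca : g ^ e * a ^ x = (z ^ (x * e))⁻¹ * (a ^ x * g ^ e) :=
      mul_eq_inv_mul_of_mul_eq (zpow_mul_zpow_of_mul_eq (hz' _) (hz' _) h.ac x e)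
    rw [hca]
    simp only [mul_assoc]
    rw [← mul_assoc (g ^ e), zpow_mul_zpow_of_mul_eq (hz' _) (hz' _) h.cb, mul_assoc,
      mul_assoc, ((hz' _).zpow_left _).symm.left_comm]
    simp only [mul_assoc, zpow_add, zpow_neg]

end QCommute

open Finsupp

section TwistedShift

variable {S M : Type*} [CommSemiring S] [AddCommGroup M]

def twistedShift (d : M) (w : M → Sˣ) : Module.End S (M →₀ S) :=
  Finsupp.lsum S fun n => (w n : S) • Finsupp.lsingle (n + d)

@[simp]
theorem twistedShift_single (d : M) (w : M → Sˣ) (n : M) (r : S) :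
    twistedShift d w (single n r) = single (n + d) (w n * r) := by
  simp [twistedShift, smul_single]

theorem twistedShift_mul (d e : M) (w v : M → Sˣ) :
    twistedShift d w * twistedShift e v = twistedShift (e + d) fun n => w (n + e) * v n := by
  refine Finsupp.lhom_ext fun n r => ?_
  simp only [Module.End.mul_apply, twistedShift_single, add_assoc, Units.val_mul, mul_assoc]

theorem twistedShift_zero_one : twistedShift (0 : M) (1 : M → Sˣ) = 1 := by
  refine Finsupp.lhom_ext fun n r => ?_
  simp

theorem algebraMap_eq_twistedShift (t : Sˣ) :
    algebraMap S (Module.End S (M →₀ S)) t = twistedShift 0 fun _ => t := by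
  refine Finsupp.lhom_ext fun n r => ?_
  simp [smul_single]

def twistedShiftUnit (d : M) (w : M → Sˣ) : (Module.End S (M →₀ S))ˣ where
  val := twistedShift d w
  inv := twistedShift (-d) fun n => (w (n - d))⁻¹
  val_inv := by
    rw [twistedShift_mul, neg_add_cancel, ← twistedShift_zero_one]
    congr; funext n; simp [← sub_eq_add_neg]
  inv_val := by
    rw [twistedShift_mul, add_neg_cancel, ← twistedShift_zero_one]
    congr; funext n; simp

def IsTwistedShift (d : M) (f : Module.End S (M →₀ S)) : Prop := ∃ w, f = twistedShift d w

theorem isTwistedShift_twistedShift (d : M) (w : M → Sˣ) : IsTwistedShift d (twistedShift d w) :=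
  ⟨w, rfl⟩

theorem isTwistedShift_algebraMap (t : Sˣ) :
    IsTwistedShift (0 : M) (algebraMap S (Module.End S (M →₀ S)) t) :=
  ⟨_, algebraMap_eq_twistedShift t⟩

namespace IsTwistedShift

variable {d e : M} {f g : Module.End S (M →₀ S)}

theorem mul (hf : IsTwistedShift d f) (hg : IsTwistedShift e g) :
    IsTwistedShift (d + e) (f * g) := by
  obtain ⟨w, rfl⟩ := hf
  obtain ⟨v, rfl⟩ := hg
  rw [twistedShift_mul, add_comm]
  exact ⟨_, rfl⟩

theorem inv {u : (Module.End S (M →₀ S))ˣ} (hu : IsTwistedShift d (u : Module.End S (M →₀ S))) :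
    IsTwistedShift (-d) (↑u⁻¹ : Module.End S (M →₀ S)) := by
  obtain ⟨w, hw⟩ := hu
  obtain rfl : u = twistedShiftUnit d w := Units.ext hw
  exact ⟨_, rfl⟩

theorem zpow {u : (Module.End S (M →₀ S))ˣ} (hu : IsTwistedShift d (u : Module.End S (M →₀ S)))
    (k : ℤ) :
    IsTwistedShift (k • d) (↑(u ^ k) : Module.End S (M →₀ S)) := by
  induction k using Int.induction_on with
  | zero => exact ⟨1, by simp [twistedShift_zero_one]⟩
  | succ k ih =>
    rw [zpow_add_one, Units.val_mul, add_smul, one_smul]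
    exact ih.mul hu
  | pred k ih =>
    rw [zpow_sub_one, Units.val_mul, sub_smul, one_smul, sub_eq_add_neg]
    exact ih.mul hu.inv

theorem exists_apply_single_zero (hf : IsTwistedShift d f) :
    ∃ t : Sˣ, f (single 0 1) = t • single d 1 := by
  obtain ⟨w, rfl⟩ := hf
  exact ⟨w 0, by simp [Units.smul_def, smul_single]⟩

theorem monomial {a b c : (Module.End S (M →₀ S))ˣ} {da db dc : M}
    (ha : IsTwistedShift da (a : Module.End S (M →₀ S)))
    (hb : IsTwistedShift db (b : Module.End S (M →₀ S)))
    (hc : IsTwistedShift dc (c : Module.End S (M →₀ S))) (m : ℤ × ℤ × ℤ) :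
    IsTwistedShift (m.1 • da + m.2.1 • db + m.2.2 • dc)
      ((_root_.monomial a b c m : (Module.End S (M →₀ S))ˣ) : Module.End S (M →₀ S)) := by
  simp only [_root_.monomial, Units.val_mul]
  exact ((ha.zpow _).mul (hb.zpow _)).mul (hc.zpow _)

end IsTwistedShift

end TwistedShift

theorem linearIndependent_of_forall_eq_units_smul_single {S M ι : Type*} [Semiring S]
    {f : ι → M →₀ S} {g : ι → M}
    (hg : Function.Injective g) (h : ∀ i, ∃ t : Sˣ, f i = t • single (g i) 1) :
    LinearIndependent S f := by
  choose t ht using h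
  rw [show f = t • fun i => single (g i) 1 from funext ht]
  exact ((Finsupp.linearIndependent_single_one (ι := M) (R := S)).comp g hg).units_smul t

theorem LinearMap.injective_of_linearIndependent_comp {S M N ι : Type*} [CommSemiring S]
    [AddCommMonoid M] [Module S M] [AddCommMonoid N] [Module S N] {f : M →ₗ[S] N} {v : ι → M}
    (hv : Submodule.span S (Set.range v) = ⊤) (hfv : LinearIndependent S (f ∘ v)) :
    Function.Injective f := by
  let b := Module.Basis.mk hfv.of_comp hv.ge
  rw [← b.constr_self S f]
  refine b.injective_constr_of_linearIndependent ?_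
  simpa [b, Function.comp_def] using hfv

theorem Submodule.span_eq_top_of_mul_mem {S A : Type*} [CommSemiring S] [Semiring A] [Algebra S A]
    {G s : Set A} (hG : Algebra.adjoin S G = ⊤) (h1 : 1 ∈ span S s)
    (hmul : ∀ g ∈ G, ∀ x ∈ s, g * x ∈ span S s) : span S s = ⊤ := by
  refine eq_top_iff'.2 fun a => ?_
  suffices ∀ y ∈ span S s, a * y ∈ span S s by simpa using this 1 h1
  have ha : a ∈ Algebra.adjoin S G := hG ▸ Algebra.mem_top
  induction ha using Algebra.adjoin_induction with
  | mem g hg =>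
    exact fun y hy => (span_le (p := (span S s).comap (LinearMap.mulLeft S g))).2 (hmul g hg) hy
  | algebraMap r => exact fun y hy => by simpa [← Algebra.smul_def] using smul_mem _ r hy
  | add x y _ _ hx hy => exact fun z hz => by simpa [add_mul] using add_mem (hx z hz) (hy z hz)
  | mul x y _ _ hx hy => exact fun z hz => by simpa [mul_assoc] using hx _ (hy z hz)

theorem RingQuot.adjoin_range_mkAlgHom_ι {S X : Type*} [CommSemiring S]
    (r : FreeAlgebra S X → FreeAlgebra S X → Prop) :
    Algebra.adjoin S (Set.range fun i => RingQuot.mkAlgHom S r (FreeAlgebra.ι S i)) = ⊤ := by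
  rw [Set.range_comp', ← AlgHom.map_adjoin, FreeAlgebra.adjoin_range_ι, Algebra.map_top,
    AlgHom.range_eq_top]
  exact RingQuot.mkAlgHom_surjective S r

namespace QuantumTorus

def unitT (n : ℤ) : Rˣ := (isUnit_T n).unit

@[simp]
theorem coe_unitT (n : ℤ) : (unitT n : R) = T n := rfl

theorem unitT_add (m n : ℤ) : unitT (m + n) = unitT m * unitT n := Units.ext (T_add m n)

section Scalar

variable (A : Type*) [Semiring A] [Algebra R A]

def scalarUnit (t : Rˣ) : Aˣ := Units.map (algebraMap R A : R →* A) t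

@[simp]
theorem coe_scalarUnit (t : Rˣ) : (scalarUnit A t : A) = algebraMap R A t := rfl

theorem scalarUnit_zpow (t : Rˣ) (s : ℤ) : scalarUnit A t ^ s = scalarUnit A (t ^ s) :=
  (map_zpow _ t s).symm

theorem scalarUnit_mem_center (t : Rˣ) : scalarUnit A t ∈ Subgroup.center Aˣ :=
  Subgroup.mem_center_iff.2 fun g => Units.ext (Algebra.commutes (t : R) (g : A)).symm

theorem map_scalarUnit {B : Type*} [Semiring B] [Algebra R B] (f : A →ₐ[R] B) (t : Rˣ) :
    Units.map (f : A →* B) (scalarUnit A t) = scalarUnit B t :=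
  Units.ext (f.commutes t)

end Scalar

variable {A : Type*} [Semiring A] [Algebra R A]

abbrev IsTriple (a b c : Aˣ) : Prop := IsQuantumTorusTriple (scalarUnit A (unitT 2)) a b c

def freeLift (a b c : Aˣ) : FT →ₐ[R] A := FreeAlgebra.lift R ![↑a, ↑b, ↑c, ↑a⁻¹, ↑b⁻¹, ↑c⁻¹]

theorem freeLift_respects {a b c : Aˣ} (h : IsTriple a b c) ⦃x y : FT⦄ (hxy : TRel x y) :
    freeLift a b c x = freeLift a b c y := by
  have hba := congrArg Units.val h.ba
  have hcb := congrArg Units.val h.cb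
  have hac := congrArg Units.val h.ac
  simp only [Units.val_mul, coe_scalarUnit, coe_unitT] at hba hcb hac
  cases hxy <;> simp [freeLift, tα, tβ, tγ, tα', tβ', tγ', fs, hba, hcb, hac]

theorem T'Rel_iff_TRel {x y : FT} : T'Rel x y ↔ TRel x y := by
  constructor <;> rintro ⟨⟩ <;> constructor

def liftQT {a b c : Aˣ} (h : IsTriple a b c) : QT →ₐ[R] A :=
  RingQuot.liftAlgHom R ⟨freeLift a b c, freeLift_respects h⟩

def liftQT' {a b c : Aˣ} (h : IsTriple a b c) : QT' →ₐ[R] A :=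
  RingQuot.liftAlgHom R
    ⟨freeLift a b c, fun _ _ hxy => freeLift_respects h (T'Rel_iff_TRel.1 hxy)⟩

section Lift

variable {a b c : Aˣ} (h : IsTriple a b c)

@[simp] theorem liftQT_qα : liftQT h qα = a := by simp [liftQT, qα, tα, freeLift]
@[simp] theorem liftQT_qβ : liftQT h qβ = b := by simp [liftQT, qβ, tβ, freeLift]
@[simp] theorem liftQT_qγ : liftQT h qγ = c := by simp [liftQT, qγ, tγ, freeLift]
@[simp] theorem liftQT'_qa : liftQT' h qa = a := by simp [liftQT', qa, tα, freeLift]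
@[simp] theorem liftQT'_qb : liftQT' h qb = b := by simp [liftQT', qb, tβ, freeLift]
@[simp] theorem liftQT'_qc : liftQT' h qc = c := by simp [liftQT', qc, tγ, freeLift]

end Lift

def uα : QTˣ :=
  ⟨qα, RingQuot.mkAlgHom R TRel tα', by rw [qα, ← map_mul, RingQuot.mkAlgHom_rel R .αinv, map_one],
    by rw [qα, ← map_mul, RingQuot.mkAlgHom_rel R .invα, map_one]⟩
def uβ : QTˣ :=
  ⟨qβ, RingQuot.mkAlgHom R TRel tβ', by rw [qβ, ← map_mul, RingQuot.mkAlgHom_rel R .βinv, map_one],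
    by rw [qβ, ← map_mul, RingQuot.mkAlgHom_rel R .invβ, map_one]⟩
def uγ : QTˣ :=
  ⟨qγ, RingQuot.mkAlgHom R TRel tγ', by rw [qγ, ← map_mul, RingQuot.mkAlgHom_rel R .γinv, map_one],
    by rw [qγ, ← map_mul, RingQuot.mkAlgHom_rel R .invγ, map_one]⟩

theorem isTriple_uα_uβ_uγ : IsTriple uα uβ uγ := by
  have rel {x y : FT} (hxy : TRel x y) := RingQuot.mkAlgHom_rel R hxy
  constructor <;> ext <;>
    simp only [Units.val_mul, coe_scalarUnit, coe_unitT, uα, uβ, uγ, qα, qβ, qγ]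
  · simpa [fs] using rel .βα
  · simpa [fs] using rel .γβ
  · simpa [fs] using rel .αγ

def toQT' : QT →ₐ[R] QT' :=
  RingQuot.liftAlgHom R
    ⟨RingQuot.mkAlgHom R T'Rel, fun _ _ hxy => RingQuot.mkAlgHom_rel R (T'Rel_iff_TRel.2 hxy)⟩

def ua : QT'ˣ := Units.map (toQT' : QT →* QT') uα
def ub : QT'ˣ := Units.map (toQT' : QT →* QT') uβ
def uc : QT'ˣ := Units.map (toQT' : QT →* QT') uγ

@[simp] theorem coe_ua : (ua : QT') = qa := RingQuot.liftAlgHom_mkAlgHom_apply _ _ _ _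
@[simp] theorem coe_ub : (ub : QT') = qb := RingQuot.liftAlgHom_mkAlgHom_apply _ _ _ _
@[simp] theorem coe_uc : (uc : QT') = qc := RingQuot.liftAlgHom_mkAlgHom_apply _ _ _ _

theorem isTriple_ua_ub_uc : IsTriple ua ub uc := by
  have h := isTriple_uα_uβ_uγ.map (Units.map (toQT' : QT →* QT'))
  rwa [map_scalarUnit] at h

theorem isTriple_embedding :
    IsTriple (scalarUnit QT' (unitT 1) * (ub * uc)) (scalarUnit QT' (unitT 1) * (uc * ua))
      (scalarUnit QT' (unitT 1) * (ua * ub)) :=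
  (isTriple_ua_ub_uc.cyclic_mul (scalarUnit_mem_center _ _)).mul_left (scalarUnit_mem_center _ _)
    (scalarUnit_mem_center _ _)

def embedding : QT →ₐ[R] QT' := liftQT isTriple_embedding

@[simp] theorem embedding_qα : embedding qα = qs 1 * (qb * qc) := by simp [embedding, qs]
@[simp] theorem embedding_qβ : embedding qβ = qs 1 * (qc * qa) := by simp [embedding, qs]
@[simp] theorem embedding_qγ : embedding qγ = qs 1 * (qa * qb) := by simp [embedding, qs]

theorem exists_mkAlgHom_ι_eq_zpow (i : Fin 6) :
    ∃ g ∈ ({uα, uβ, uγ} : Set QTˣ), ∃ e : ℤ,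
      RingQuot.mkAlgHom R TRel (FreeAlgebra.ι R i) = ↑(g ^ e) := by
  fin_cases i
  exacts [⟨uα, by simp, 1, by simp [uα, qα, tα]⟩, ⟨uβ, by simp, 1, by simp [uβ, qβ, tβ]⟩,
    ⟨uγ, by simp, 1, by simp [uγ, qγ, tγ]⟩, ⟨uα, by simp, -1, by simp [uα, tα']⟩,
    ⟨uβ, by simp, -1, by simp [uβ, tβ']⟩, ⟨uγ, by simp, -1, by simp [uγ, tγ']⟩]

theorem span_monomial_eq_top :
    Submodule.span R (Set.range fun m => ((monomial uα uβ uγ m : QTˣ) : QT)) = ⊤ := by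
  refine Submodule.span_eq_top_of_mul_mem (RingQuot.adjoin_range_mkAlgHom_ι TRel)
    (Submodule.subset_span ⟨0, by simp [monomial_zero]⟩) ?_
  rintro _ ⟨i, rfl⟩ _ ⟨m, rfl⟩
  obtain ⟨g, hg, e, hge⟩ := exists_mkAlgHom_ι_eq_zpow i
  obtain ⟨s, m', h⟩ :=
    isTriple_uα_uβ_uγ.exists_zpow_mul_monomial (scalarUnit_mem_center _ _) hg e m
  simp only [hge, ← Units.val_mul, h]
  rw [Units.val_mul, scalarUnit_zpow, coe_scalarUnit, ← Algebra.smul_def]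
  exact Submodule.smul_mem _ _ (Submodule.subset_span ⟨m', rfl⟩)

abbrev V : Type := ℤ × ℤ × ℤ →₀ R

def shiftA : (Module.End R V)ˣ := twistedShiftUnit (1, 0, 0) fun n => unitT (2 * n.2.2)
def shiftB : (Module.End R V)ˣ := twistedShiftUnit (0, 1, 0) fun n => unitT (2 * n.1)
def shiftC : (Module.End R V)ˣ := twistedShiftUnit (0, 0, 1) fun n => unitT (2 * n.2.1)

theorem isTriple_shift : IsTriple shiftA shiftB shiftC := by
  constructor <;> ext1 <;>
    simp only [shiftA, shiftB, shiftC, twistedShiftUnit, Units.val_mul, coe_scalarUnit,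
      algebraMap_eq_twistedShift, twistedShift_mul] <;>
    congr 1 <;> funext n <;> simp only [← unitT_add, Prod.fst_add, Prod.snd_add] <;> congr 1 <;>
    simp <;> ring

def rep : QT' →ₐ[R] Module.End R V := liftQT' isTriple_shift

theorem isTwistedShift_shiftA : IsTwistedShift (1, 0, 0) (shiftA : Module.End R V) :=
  isTwistedShift_twistedShift _ _
theorem isTwistedShift_shiftB : IsTwistedShift (0, 1, 0) (shiftB : Module.End R V) :=
  isTwistedShift_twistedShift _ _
theorem isTwistedShift_shiftC : IsTwistedShift (0, 0, 1) (shiftC : Module.End R V) :=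
  isTwistedShift_twistedShift _ _

theorem isTwistedShift_rep_embedding_qα :
    IsTwistedShift ((0, 1, 1) : ℤ × ℤ × ℤ) (rep (embedding qα)) := by
  convert (isTwistedShift_algebraMap (unitT 1)).mul
    (isTwistedShift_shiftB.mul isTwistedShift_shiftC) using 1 <;> simp [rep, qs]

theorem isTwistedShift_rep_embedding_qβ :
    IsTwistedShift ((1, 0, 1) : ℤ × ℤ × ℤ) (rep (embedding qβ)) := by
  convert (isTwistedShift_algebraMap (unitT 1)).mul
    (isTwistedShift_shiftC.mul isTwistedShift_shiftA) using 1 <;> simp [rep, qs]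

theorem isTwistedShift_rep_embedding_qγ :
    IsTwistedShift ((1, 1, 0) : ℤ × ℤ × ℤ) (rep (embedding qγ)) := by
  convert (isTwistedShift_algebraMap (unitT 1)).mul
    (isTwistedShift_shiftA.mul isTwistedShift_shiftB) using 1 <;> simp [rep, qs]

def embeddingDegree (m : ℤ × ℤ × ℤ) : ℤ × ℤ × ℤ :=
  m.1 • (0, 1, 1) + m.2.1 • (1, 0, 1) + m.2.2 • (1, 1, 0)

theorem embeddingDegree_injective : Function.Injective embeddingDegree := by
  rintro ⟨x, y, w⟩ ⟨x', y', w'⟩ h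
  simp only [embeddingDegree, Prod.ext_iff] at h ⊢
  simp at h
  omega

theorem isTwistedShift_rep_embedding_monomial (m : ℤ × ℤ × ℤ) :
    IsTwistedShift (embeddingDegree m) (rep (embedding (monomial uα uβ uγ m : QTˣ))) := by
  let f : QT →* Module.End R V := rep.comp embedding
  have hf (u : QTˣ) : (Units.map f u : Module.End R V) = rep (embedding u) := Units.coe_map f u
  rw [← hf, map_monomial]
  refine IsTwistedShift.monomial ?_ ?_ ?_ m <;> rw [hf]
  exacts [isTwistedShift_rep_embedding_qα, isTwistedShift_rep_embedding_qβ,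
    isTwistedShift_rep_embedding_qγ]

theorem injective_embedding : Function.Injective embedding := by
  let ev : QT →ₗ[R] V := LinearMap.applyₗ (single 0 1) ∘ₗ (rep.comp embedding).toLinearMap
  have hli : LinearIndependent R fun m => ev (monomial uα uβ uγ m : QTˣ) := by
    refine linearIndependent_of_forall_eq_units_smul_single embeddingDegree_injective fun m => ?_
    exact (isTwistedShift_rep_embedding_monomial m).exists_apply_single_zero
  have hev : Function.Injective ev :=
    LinearMap.injective_of_linearIndependent_comp span_monomial_eq_top hli
  exact fun x y hxy => hev (congrArg (fun z => rep z (single 0 1)) hxy)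

end QuantumTorus

/-- There is an injective algebra homomorphism `T → T'` with
`α ↦ q^{1/2}bc`, `β ↦ q^{1/2}ca`, `γ ↦ q^{1/2}ab`. -/
theorem torus_embedding :
    ∃ φ : QT →ₐ[R] QT',
      φ qα = qs 1 * (qb * qc) ∧
      φ qβ = qs 1 * (qc * qa) ∧
      φ qγ = qs 1 * (qa * qb) ∧
      Function.Injective φ :=
  ⟨QuantumTorus.embedding, QuantumTorus.embedding_qα, QuantumTorus.embedding_qβ,
    QuantumTorus.embedding_qγ, QuantumTorus.injective_embedding⟩
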